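/- For families Ω and Σ of v distinct nonempty subsets of a v-set V, write Σ ∼ Ω if Σ = Ω or Σ = f_A(Ω) for some A ∈ Ω. Then ∼ is an equivalence relation on the collection of families of v distinct nonempty subsets of V. -/
import Mathlib


open scoped symmDiff

/-- Block complementation of a family of blocks with respect to a block `A`:
the new family is `{A} ∪ {A ∆ B : B ∈ L, B ≠ A}`. -/
def blockComp {α : Type*} [DecidableEq α] (A : Finset α) (L : Finset (Finset α)) :
    Finset (Finset α) :=
  insert A ((L.erase A).image (fun B => A ∆ B))

/-- The replication number of a point `x`: the number of blocks of `L` containing `x`. -/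
def repl {α : Type*} [DecidableEq α] (L : Finset (Finset α)) (x : α) : ℕ :=
  (L.filter (fun B => x ∈ B)).card

/-- A Ryser design on point set `X` with block family `L` and index `lam`. -/
def IsRyserDesign {α : Type*} [DecidableEq α] (X : Finset α) (L : Finset (Finset α))
    (lam : ℕ) : Prop :=
  1 ≤ lam ∧ L.card = X.card ∧ (∀ B ∈ L, B ⊆ X) ∧
    (∀ B₁ ∈ L, ∀ B₂ ∈ L, B₁ ≠ B₂ → (B₁ ∩ B₂).card = lam) ∧
    (∀ B ∈ L, lam < B.card) ∧
    (∃ B₁ ∈ L, ∃ B₂ ∈ L, B₁.card ≠ B₂.card)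

/-- A symmetric design on point set `X` with block family `L`, block size `k` and index `lam`. -/
def IsSymmetricDesign {α : Type*} [DecidableEq α] (X : Finset α) (L : Finset (Finset α))
    (k lam : ℕ) : Prop :=
  1 ≤ lam ∧ L.card = X.card ∧ (∀ B ∈ L, B ⊆ X) ∧
    (∀ B₁ ∈ L, ∀ B₂ ∈ L, B₁ ≠ B₂ → (B₁ ∩ B₂).card = lam) ∧
    (∀ B ∈ L, B.card = k) ∧ lam < k

/-- A family of `|V|` distinct nonempty subsets of the finite set `V`
(distinctness is built into `Finset`). -/
def GoodFamily {α : Type*} [DecidableEq α] (V : Finset α) (L : Finset (Finset α)) : Prop :=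
  L.card = V.card ∧ ∀ B ∈ L, B ⊆ V ∧ B.Nonempty

/-- `DesignSim M L` : the family `M` is obtained from `L` by the identity or by a single
block complementation with respect to a member of `L` (the relation `∼`). -/
def DesignSim {α : Type*} [DecidableEq α] (M L : Finset (Finset α)) : Prop :=
  M = L ∨ ∃ A ∈ L, M = blockComp A L

lemma mem_blockComp {α : Type*} [DecidableEq α] {A x : Finset α} {L : Finset (Finset α)} :
    x ∈ blockComp A L ↔ x = A ∨ ∃ B ∈ L, B ≠ A ∧ x = A ∆ B := by
  simp only [blockComp, Finset.mem_insert, Finset.mem_image, Finset.mem_erase]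
  constructor
  · rintro (rfl | ⟨B, ⟨hBA, hBL⟩, rfl⟩)
    · exact Or.inl rfl
    · exact Or.inr ⟨B, hBL, hBA, rfl⟩
  · rintro (rfl | ⟨B, hBL, hBA, rfl⟩)
    · exact Or.inl rfl
    · exact Or.inr ⟨B, ⟨hBA, hBL⟩, rfl⟩

lemma symmDiff_symmDiff_symmDiff {α : Type*} [DecidableEq α] (a b c : Finset α) :
    (a ∆ b) ∆ (a ∆ c) = b ∆ c := by
  ext x; simp only [Finset.mem_symmDiff]; tauto

lemma symmDiff_ne_of_nonempty {α : Type*} [DecidableEq α] {A B : Finset α}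
    (hB : B.Nonempty) : A ∆ B ≠ A := by
  intro h
  rw [symmDiff_eq_left] at h
  simp only [Finset.bot_eq_empty] at h
  exact hB.ne_empty h

lemma symmDiff_cancel_eq {α : Type*} [DecidableEq α] {A B C : Finset α}
    (h : A ∆ B = A ∆ C) : B = C := by
  have := congrArg (fun t => A ∆ t) h
  simpa [symmDiff_symmDiff_cancel_left] using this

lemma blockComp_blockComp_self {α : Type*} [DecidableEq α] {A : Finset α}
    {L : Finset (Finset α)} (hA : A ∈ L) (hne : ∀ B ∈ L, B.Nonempty) :
    blockComp A (blockComp A L) = L := by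
  ext x
  rw [mem_blockComp]
  constructor
  · rintro (rfl | ⟨B, hB, hBA, rfl⟩)
    · exact hA
    · rw [mem_blockComp] at hB
      rcases hB with rfl | ⟨B', hB', _, rfl⟩
      · exact absurd rfl hBA
      · rw [symmDiff_symmDiff_cancel_left]; exact hB'
  · intro hx
    by_cases h : x = A
    · exact Or.inl h
    · refine Or.inr ⟨A ∆ x, ?_, symmDiff_ne_of_nonempty (hne x hx), ?_⟩
      · rw [mem_blockComp]; exact Or.inr ⟨x, hx, h, rfl⟩
      · rw [symmDiff_symmDiff_cancel_left]

lemma blockComp_blockComp {α : Type*} [DecidableEq α] {A C : Finset α}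
    {L : Finset (Finset α)} (hA : A ∈ L) (hC : C ∈ L) (hCA : C ≠ A)
    (hne : ∀ B ∈ L, B.Nonempty) :
    blockComp (A ∆ C) (blockComp A L) = blockComp C L := by
  have hACA : (A ∆ C) ∆ A = C := by
    rw [symmDiff_comm, symmDiff_symmDiff_cancel_left]
  ext x
  rw [mem_blockComp, mem_blockComp]
  constructor
  · rintro (rfl | ⟨B, hB, hBAC, rfl⟩)
    · exact Or.inr ⟨A, hA, Ne.symm hCA, symmDiff_comm A C⟩
    · rw [mem_blockComp] at hB
      rcases hB with rfl | ⟨B', hB', hB'A, rfl⟩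
      · exact Or.inl hACA
      · refine Or.inr ⟨B', hB', ?_, symmDiff_symmDiff_symmDiff A C B'⟩
        rintro rfl; exact hBAC rfl
  · rintro (rfl | ⟨B, hB, hBC, rfl⟩)
    · refine Or.inr ⟨A, ?_, ?_, hACA.symm⟩
      · rw [mem_blockComp]; exact Or.inl rfl
      · exact (symmDiff_ne_of_nonempty (hne _ hC)).symm
    · by_cases hBA : B = A
      · subst hBA; exact Or.inl (symmDiff_comm C B)
      · refine Or.inr ⟨A ∆ B, ?_, ?_, (symmDiff_symmDiff_symmDiff A C B).symm⟩
        · rw [mem_blockComp]; exact Or.inr ⟨B, hB, hBA, rfl⟩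
        · intro h; exact hBC (symmDiff_cancel_eq h.symm).symm

/-- The relation `Σ ∼ Ω` (i.e. `Σ = Ω` or `Σ = f_A(Ω)` for some `A ∈ Ω`) is an
equivalence relation on the collection of families of `v` distinct nonempty subsets
of a `v`-set `V`. -/
theorem sim_equivalence {α : Type*} [DecidableEq α] (V : Finset α) :
    (∀ L : Finset (Finset α), GoodFamily V L → DesignSim L L) ∧
    (∀ L M : Finset (Finset α), GoodFamily V L → GoodFamily V M →
      DesignSim M L → DesignSim L M) ∧
    (∀ L M N : Finset (Finset α), GoodFamily V L → GoodFamily V M → GoodFamily V N →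
      DesignSim M L → DesignSim N M → DesignSim N L) := by
  refine ⟨fun L _ => Or.inl rfl, ?_, ?_⟩
  · rintro L M hL hM (rfl | ⟨A, hA, rfl⟩)
    · exact Or.inl rfl
    · refine Or.inr ⟨A, ?_, ?_⟩
      · rw [mem_blockComp]; exact Or.inl rfl
      · exact (blockComp_blockComp_self hA (fun B hB => (hL.2 B hB).2)).symm
  · rintro L M N hL hM hN (rfl | ⟨A, hA, rfl⟩) h2
    · exact h2
    · have hne : ∀ B ∈ L, B.Nonempty := fun B hB => (hL.2 B hB).2
      rcases h2 with rfl | ⟨A', hA', rfl⟩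
      · exact Or.inr ⟨A, hA, rfl⟩
      · rw [mem_blockComp] at hA'
        rcases hA' with rfl | ⟨C, hC, hCA, rfl⟩
        · exact Or.inl (blockComp_blockComp_self hA hne)
        · exact Or.inr ⟨C, hC, blockComp_blockComp hA hC hCA hne⟩
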